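/- For n ≥ 3 agents, a 1-out-of-n MMS allocation of chores need not satisfy envy-freeness-up-to-c chores nor proportionality-up-to-c chores, for any constant c ≥ 1. Concretely, with k = 3c+3: one chore of value -k and k chores of value -1, all agents identical; the allocation giving agent 1 the hard chore, agent 2 all k easy chores, and others nothing satisfies MMS^n (each agent's value ≥ -k = MMS^n), but agent 2 envies agent 3 even after removing k-1 > c chores from agent 2's bundle, and agent 2's value is below the proportional share -2k/n even after removing c chores. -/

import Mathlib

open Finset

/-- The 1-out-of-`d` maximin share of an agent with additive valuation `v`
over `m` items: the maximum over partitions of the items into `d` bundles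
of the minimum bundle value. -/
noncomputable def MMS {m : ℕ} (d : ℕ) (v : Fin m → ℝ) : ℝ :=
  ⨆ P : Fin m → Fin d, ⨅ j : Fin d, ∑ i ∈ Finset.univ.filter (fun i => P i = j), v i

/-!
All agents share the valuation `v`. Whatever the partition, the hard chore lies in some bundle,
and since all chores are nonpositive that bundle is worth at most `-k`; so `MMS^n ≤ -k`, and each
bundle of the allocation (`{hard}`, all easy chores, or nothing) is worth at least `-k`.
Agent 1 keeps at least `k - c = 2c + 3` easy chores after removing `c` of them, which is
negative (agent 2 has nothing) and, as `n ≥ 3`, less than the proportional share `-2k/n`.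
-/

theorem MMS_le_of_nonpos {m d : ℕ} [NeZero d] {v : Fin m → ℝ} (hv : ∀ i, v i ≤ 0)
    (i : Fin m) : MMS d v ≤ v i := by
  refine ciSup_le fun P => (ciInf_le (Set.finite_range _).bddBelow (P i)).trans ?_
  rw [← sum_singleton v i]
  exact sum_le_sum_of_subset_of_nonpos' (by simp) fun j _ _ => hv j

section HardAndEasyChores

variable {m : ℕ} {v : Fin (m + 1) → ℝ}

theorem nonpos_of_eq_neg_natCast (hv₀ : v 0 = -m) (hv : ∀ i ≠ 0, v i = -1) (i : Fin (m + 1)) :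
    v i ≤ 0 := by
  by_cases hi : i = 0
  · simp [hi, hv₀]
  · simp [hv i hi]

theorem sum_eq_neg_card_of_zero_notMem (hv : ∀ i ≠ 0, v i = -1) {s : Finset (Fin (m + 1))}
    (hs : 0 ∉ s) : ∑ i ∈ s, v i = -s.card := by
  rw [sum_congr rfl fun i hi => hv i (ne_of_mem_of_not_mem hi hs)]
  simp

theorem sum_erase_zero_sdiff (hv : ∀ i ≠ 0, v i = -1) {S : Finset (Fin (m + 1))}
    (hS : S ⊆ univ.erase 0) : ∑ i ∈ univ.erase 0 \ S, v i = -((m - S.card : ℕ) : ℝ) := by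
  rw [sum_eq_neg_card_of_zero_notMem hv (by simp), card_sdiff_of_subset hS,
    card_erase_of_mem (mem_univ _), card_univ, Fintype.card_fin, Nat.add_sub_cancel]

theorem sum_univ_eq_sub_of_forall_ne_zero (hv : ∀ i ≠ 0, v i = -1) :
    ∑ i, v i = v 0 - m := by
  rw [Fin.sum_univ_succ, sum_congr rfl fun i _ => hv i.succ (Fin.succ_ne_zero i)]
  simp [sub_eq_add_neg]

variable {n : ℕ} {a b : Fin n}

theorem mem_filter_ite_val_eq_zero {i : Fin (m + 1)} {j : Fin n} :
    i ∈ univ.filter (fun i : Fin (m + 1) => (if i.val = 0 then a else b) = j) ↔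
      (if i = 0 then a else b) = j := by
  simp only [mem_filter, mem_univ, true_and, Fin.val_eq_zero_iff]

theorem filter_ite_val_eq_zero_eq_left (hab : a ≠ b) :
    univ.filter (fun i : Fin (m + 1) => (if i.val = 0 then a else b) = a) = {0} := by
  ext i
  rw [mem_filter_ite_val_eq_zero, mem_singleton]
  split_ifs with hi <;> simp [hi, hab.symm]

theorem filter_ite_val_eq_zero_eq_right (hab : a ≠ b) :
    univ.filter (fun i : Fin (m + 1) => (if i.val = 0 then a else b) = b) = univ.erase 0 := by
  ext i
  rw [mem_filter_ite_val_eq_zero, mem_erase]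
  split_ifs with hi <;> simp [hi, hab]

theorem filter_ite_val_eq_zero_eq_of_ne {j : Fin n} (hja : a ≠ j) (hjb : b ≠ j) :
    univ.filter (fun i : Fin (m + 1) => (if i.val = 0 then a else b) = j) = ∅ := by
  ext i
  rw [mem_filter_ite_val_eq_zero]
  split_ifs <;> simpa

theorem neg_natCast_le_sum_filter_ite (hv₀ : v 0 = -m) (hv : ∀ i ≠ 0, v i = -1) (hab : a ≠ b)
    (j : Fin n) :
    -(m : ℝ) ≤ ∑ i ∈ univ.filter (fun i : Fin (m + 1) => (if i.val = 0 then a else b) = j), v i := by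
  by_cases hja : a = j
  · rw [← hja, filter_ite_val_eq_zero_eq_left hab, sum_singleton, hv₀]
  by_cases hjb : b = j
  · rw [← hjb, filter_ite_val_eq_zero_eq_right hab]
    simpa using (sum_erase_zero_sdiff hv (empty_subset _)).ge
  · rw [filter_ite_val_eq_zero_eq_of_ne hja hjb, sum_empty]
    simp

end HardAndEasyChores

theorem neg_sub_lt_neg_two_mul_div {n k s : ℕ} (hn : 3 ≤ n) (hs : 3 * s < k) :
    -((k - s : ℕ) : ℝ) < -(2 * k) / n := by
  have hn0 : (0 : ℝ) < n := by exact_mod_cast (show 0 < n by omega)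
  have key : 2 * k < (k - s) * n := by
    have := Nat.mul_le_mul_left (k - s) hn
    omega
  rw [lt_div_iff₀ hn0, neg_mul, neg_lt_neg_iff]
  exact_mod_cast key

/-- A 1-out-of-`n` MMS allocation need not satisfy envy-freeness-up-to-`c` nor
proportionality-up-to-`c`: with `k = 3c+3`, one chore of value `-k` and `k` chores
of value `-1`, the allocation giving agent 0 the hard chore, agent 1 all easy
chores, and the rest nothing, satisfies `MMS^n` for every agent, but agent 1
envies agent 2 even after removing any `c` chores, and agent 1's value is below
the proportional share even after removing any `c` chores. -/
theorem stmt9 (n c : ℕ) (hn : 3 ≤ n) :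
    let k := 3 * c + 3
    let v : Fin (k + 1) → ℝ := fun i => if i.val = 0 then -(k : ℝ) else -1
    let A : Fin (k + 1) → Fin n := fun i =>
      if i.val = 0 then ⟨0, by omega⟩ else ⟨1, by omega⟩
    let bundle : Fin n → Finset (Fin (k + 1)) := fun j =>
      Finset.univ.filter (fun i => A i = j)
    (∀ j : Fin n, MMS n v ≤ ∑ i ∈ bundle j, v i) ∧
    (∀ S ⊆ bundle ⟨1, by omega⟩, S.card ≤ c →
      ∑ i ∈ bundle ⟨1, by omega⟩ \ S, v i < ∑ i ∈ bundle ⟨2, by omega⟩, v i) ∧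
    (∀ S ⊆ bundle ⟨1, by omega⟩, S.card ≤ c →
      ∑ i ∈ bundle ⟨1, by omega⟩ \ S, v i < (∑ i, v i) / (n : ℝ)) := by
  intro k v A bundle
  have : NeZero n := ⟨by omega⟩
  have hv₀ : v 0 = -k := by simp [v]
  have hv : ∀ i ≠ 0, v i = -1 := fun i hi => if_neg (Fin.val_ne_zero_iff.mpr hi)
  have h01 : (⟨0, by omega⟩ : Fin n) ≠ ⟨1, by omega⟩ := by simp
  have bundle_one : bundle ⟨1, by omega⟩ = univ.erase 0 := filter_ite_val_eq_zero_eq_right h01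
  have hMMS : MMS n v ≤ -k := hv₀ ▸ MMS_le_of_nonpos (nonpos_of_eq_neg_natCast hv₀ hv) 0
  refine ⟨fun j => hMMS.trans (neg_natCast_le_sum_filter_ite hv₀ hv h01 j),
    fun S hS hSc => ?_, fun S hS hSc => ?_⟩ <;> rw [bundle_one] at hS ⊢
  · have bundle_two : bundle ⟨2, by omega⟩ = ∅ :=
      filter_ite_val_eq_zero_eq_of_ne (by simp) (by simp)
    rw [sum_erase_zero_sdiff hv hS, bundle_two, sum_empty]
    simpa using (show S.card < k by omega)
  · rw [sum_erase_zero_sdiff hv hS, sum_univ_eq_sub_of_forall_ne_zero hv, hv₀, ← neg_add', ← two_mul]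
    exact neg_sub_lt_neg_two_mul_div hn (show 3 * S.card < 3 * c + 3 by omega)
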